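/- The function φ₁₃(p,q) = (p³ − p)/(1 + p²)⁴·q⁵ + (21p⁵ + 2p³ − 19p)/(12(1 + p²)⁴)·q³ + (3p⁷ + 4p⁵ − p³ − 2p)/(4(1 + p²)⁴)·q satisfies the equation (1 + p²)φ_pp + 2pq·φ_pq + (1 + q²)φ_qq = 0 for all real p, q. -/

import Mathlib

/-
In `q` the function is an odd quintic `a(p) q⁵ + b(p) q³ + c(p) q`, and the equation splits, by
comparing the coefficients of `q⁵`, `q³` and `q`, into a triangular system of linear ODEs for
`a`, `b`, `c`. Each coefficient is `N(p) / (1 + p²)⁴` with `N` a polynomial, and differentiation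
keeps this shape, raising the exponent by one; so every ODE becomes a polynomial identity.
-/

noncomputable def pd₁ (f : ℝ → ℝ → ℝ) : ℝ → ℝ → ℝ := fun p q => deriv (fun x => f x q) p
noncomputable def pd₂ (f : ℝ → ℝ → ℝ) : ℝ → ℝ → ℝ := fun p q => deriv (fun y => f p y) q

open Polynomial

noncomputable def legendreOp (φ : ℝ → ℝ → ℝ) (p q : ℝ) : ℝ :=
  (1 + p ^ 2) * pd₁ (pd₁ φ) p q + 2 * p * q * pd₁ (pd₂ φ) p q + (1 + q ^ 2) * pd₂ (pd₂ φ) p q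

theorem pd₁_eq_of_hasDerivAt {f f' : ℝ → ℝ → ℝ}
    (h : ∀ p q, HasDerivAt (fun x => f x q) (f' p q) p) : pd₁ f = f' :=
  funext₂ fun p q => (h p q).deriv

theorem pd₂_eq_of_hasDerivAt {f f' : ℝ → ℝ → ℝ}
    (h : ∀ p q, HasDerivAt (fun y => f p y) (f' p q) q) : pd₂ f = f' :=
  funext₂ fun p q => (h p q).deriv

def oddQuintic (a b c : ℝ → ℝ) (p q : ℝ) : ℝ := a p * q ^ 5 + b p * q ^ 3 + c p * q

section oddQuintic

variable {a a' a'' b b' b'' c c' c'' : ℝ → ℝ}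

theorem pd₁_oddQuintic (ha : ∀ p, HasDerivAt a (a' p) p) (hb : ∀ p, HasDerivAt b (b' p) p)
    (hc : ∀ p, HasDerivAt c (c' p) p) : pd₁ (oddQuintic a b c) = oddQuintic a' b' c' :=
  pd₁_eq_of_hasDerivAt fun p _ =>
    (((ha p).mul_const _).add ((hb p).mul_const _)).add ((hc p).mul_const _)

theorem pd₂_oddQuintic :
    pd₂ (oddQuintic a b c) = fun p q => 5 * a p * q ^ 4 + 3 * b p * q ^ 2 + c p :=
  pd₂_eq_of_hasDerivAt fun p q => by
    refine ((((hasDerivAt_pow 5 q).const_mul (a p)).add ((hasDerivAt_pow 3 q).const_mul (b p))).add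
      ((hasDerivAt_id q).const_mul (c p))).congr_deriv ?_
    push_cast; ring

theorem pd₁_pd₂_oddQuintic (ha : ∀ p, HasDerivAt a (a' p) p)
    (hb : ∀ p, HasDerivAt b (b' p) p) (hc : ∀ p, HasDerivAt c (c' p) p) :
    pd₁ (pd₂ (oddQuintic a b c)) = fun p q => 5 * a' p * q ^ 4 + 3 * b' p * q ^ 2 + c' p := by
  rw [pd₂_oddQuintic]
  refine pd₁_eq_of_hasDerivAt fun p q => ?_
  refine ((((ha p).const_mul 5).mul_const _).add (((hb p).const_mul 3).mul_const _)).add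
    (hc p) |>.congr_deriv ?_
  ring

theorem pd₂_pd₂_oddQuintic :
    pd₂ (pd₂ (oddQuintic a b c)) = fun p q => 20 * a p * q ^ 3 + 6 * b p * q := by
  rw [pd₂_oddQuintic]
  refine pd₂_eq_of_hasDerivAt fun p q => ?_
  refine ((((hasDerivAt_pow 4 q).const_mul (5 * a p)).add
    ((hasDerivAt_pow 2 q).const_mul (3 * b p))).add_const (c p)).congr_deriv ?_
  push_cast; ring

theorem legendreOp_oddQuintic_eq_zero (ha : ∀ p, HasDerivAt a (a' p) p)
    (ha' : ∀ p, HasDerivAt a' (a'' p) p) (hb : ∀ p, HasDerivAt b (b' p) p)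
    (hb' : ∀ p, HasDerivAt b' (b'' p) p) (hc : ∀ p, HasDerivAt c (c' p) p)
    (hc' : ∀ p, HasDerivAt c' (c'' p) p)
    (h₅ : ∀ p, (1 + p ^ 2) * a'' p + 10 * p * a' p + 20 * a p = 0)
    (h₃ : ∀ p, (1 + p ^ 2) * b'' p + 6 * p * b' p + 6 * b p + 20 * a p = 0)
    (h₁ : ∀ p, (1 + p ^ 2) * c'' p + 2 * p * c' p + 6 * b p = 0) (p q : ℝ) :
    legendreOp (oddQuintic a b c) p q = 0 := by
  rw [legendreOp, pd₁_oddQuintic ha hb hc, pd₁_oddQuintic ha' hb' hc',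
    pd₁_pd₂_oddQuintic ha hb hc, pd₂_pd₂_oddQuintic, oddQuintic]
  linear_combination q ^ 5 * h₅ p + q ^ 3 * h₃ p + q * h₁ p

end oddQuintic

noncomputable def divOneAddSqPow (N : ℝ[X]) (k : ℕ) (x : ℝ) : ℝ :=
  N.eval x / (1 + x ^ 2) ^ k

noncomputable def derivNumerator (N : ℝ[X]) (k : ℕ) : ℝ[X] :=
  derivative N * (1 + X ^ 2) - (2 * k : ℝ[X]) * X * N

theorem hasDerivAt_divOneAddSqPow (N : ℝ[X]) (k : ℕ) (x : ℝ) :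
    HasDerivAt (divOneAddSqPow N k) (divOneAddSqPow (derivNumerator N k) (k + 1) x) x := by
  have hD : HasDerivAt (fun x : ℝ => 1 + x ^ 2) (2 * x) x := by
    simpa using (hasDerivAt_pow 2 x).const_add 1
  refine ((N.hasDerivAt x).div (hD.pow k) (pow_ne_zero k (by positivity))).congr_deriv ?_
  simp only [divOneAddSqPow, derivNumerator, eval_sub, eval_mul, eval_add, eval_one, eval_pow,
    eval_X, eval_natCast, eval_ofNat, Pi.pow_apply]
  rcases k with _ | k
  · field_simp
    simp
  · rw [Nat.add_sub_cancel]
    field_simp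
    ring

theorem phi_solves_legendre_eq :
    ∀ p q : ℝ,
      (1 + p ^ 2) * pd₁ (pd₁ (fun a b => (a ^ 3 - a) / (1 + a ^ 2) ^ 4 * b ^ 5 + (21 * a ^ 5 + 2 * a ^ 3 - 19 * a) / (12 * (1 + a ^ 2) ^ 4) * b ^ 3 + (3 * a ^ 7 + 4 * a ^ 5 - a ^ 3 - 2 * a) / (4 * (1 + a ^ 2) ^ 4) * b)) p q
        + 2 * p * q * pd₁ (pd₂ (fun a b => (a ^ 3 - a) / (1 + a ^ 2) ^ 4 * b ^ 5 + (21 * a ^ 5 + 2 * a ^ 3 - 19 * a) / (12 * (1 + a ^ 2) ^ 4) * b ^ 3 + (3 * a ^ 7 + 4 * a ^ 5 - a ^ 3 - 2 * a) / (4 * (1 + a ^ 2) ^ 4) * b)) p q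
        + (1 + q ^ 2) * pd₂ (pd₂ (fun a b => (a ^ 3 - a) / (1 + a ^ 2) ^ 4 * b ^ 5 + (21 * a ^ 5 + 2 * a ^ 3 - 19 * a) / (12 * (1 + a ^ 2) ^ 4) * b ^ 3 + (3 * a ^ 7 + 4 * a ^ 5 - a ^ 3 - 2 * a) / (4 * (1 + a ^ 2) ^ 4) * b)) p q = 0 := by
  intro p q
  change legendreOp (oddQuintic _ _ _) p q = 0
  convert legendreOp_oddQuintic_eq_zero (hasDerivAt_divOneAddSqPow (X ^ 3 - X) 4)
    (hasDerivAt_divOneAddSqPow _ 5)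
    (hasDerivAt_divOneAddSqPow (C (1 / 12) * (21 * X ^ 5 + 2 * X ^ 3 - 19 * X)) 4)
    (hasDerivAt_divOneAddSqPow _ 5)
    (hasDerivAt_divOneAddSqPow (C (1 / 4) * (3 * X ^ 7 + 4 * X ^ 5 - X ^ 3 - 2 * X)) 4)
    (hasDerivAt_divOneAddSqPow _ 5) ?_ ?_ ?_ p q using 4
  -- remaining goals: the coefficients are these `divOneAddSqPow`s, and they solve the three ODEs
  all_goals
    intros
    simp only [divOneAddSqPow, derivNumerator, derivative_mul, derivative_C, derivative_sub,
      derivative_add, derivative_ofNat, derivative_natCast, derivative_X_pow_succ, derivative_X,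
      derivative_one, derivative_zero, eval_zero, eval_sub, eval_mul, eval_add, eval_C, eval_ofNat,
      eval_natCast, eval_one, eval_pow, eval_X]
  all_goals field_simp
  all_goals ring
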